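/- Forestlike derivations suffice in the single-agent refined calculi: for each n ∈ ℕ, if a labelled formula w:φ (φ ∈ L^1) is derivable in Ldm_n^1 L, then it has a derivation in Ldm_n^1 L in which every labelled sequent occurring in the derivation is forestlike. -/

import Mathlib

namespace Stit

/-- Formulas of the language `L^m` (negation normal form), with agents `Fin m`
and propositional variables indexed by `ℕ`. -/
inductive Fml (m : ℕ) : Type
  | pos : ℕ → Fml m                  -- p
  | neg : ℕ → Fml m                  -- p̄
  | and : Fml m → Fml m → Fml m      -- φ ∧ ψ
  | or  : Fml m → Fml m → Fml m      -- φ ∨ ψ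
  | box : Fml m → Fml m              -- □φ
  | dia : Fml m → Fml m              -- ◇φ
  | ag  : Fin m → Fml m → Fml m      -- [i]φ
  | dag : Fin m → Fml m → Fml m      -- ⟨i⟩φ

namespace Fml

/-- Negation `φ̄`: replace every connective/modality by its dual and swap `p` with `p̄`. -/
def negF {m : ℕ} : Fml m → Fml m
  | pos p => neg p
  | neg p => pos p
  | and φ ψ => or φ.negF ψ.negF
  | or φ ψ => and φ.negF ψ.negF
  | box φ => dia φ.negF
  | dia φ => box φ.negF
  | ag i φ => dag i φ.negF
  | dag i φ => ag i φ.negF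

/-- `φ → ψ` abbreviates `φ̄ ∨ ψ`. -/
def impF {m : ℕ} (φ ψ : Fml m) : Fml m := or φ.negF ψ

end Fml

/-- `f 0 ∧ f 1 ∧ ⋯ ∧ f k` (left-associated). -/
def conjUpTo {m : ℕ} (f : ℕ → Fml m) : ℕ → Fml m
  | 0 => f 0
  | k+1 => Fml.and (conjUpTo f k) (f (k+1))

/-- `f 0 ∨ f 1 ∨ ⋯ ∨ f k` (left-associated). -/
def disjUpTo {m : ℕ} (f : ℕ → Fml m) : ℕ → Fml m
  | 0 => f 0
  | k+1 => Fml.or (disjUpTo f k) (f (k+1))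

/-- `(f 0)̄ ∧ ((f 1)̄ ∧ ⋯ ((f (j-1))̄ ∧ base))`. -/
def prefNegConj {m : ℕ} (f : ℕ → Fml m) : ℕ → Fml m → Fml m
  | 0, base => base
  | j+1, base => prefNegConj f j (Fml.and (f j).negF base)

/-- The antecedent `◇[i]φ_0 ∧ ◇(φ̄_0 ∧ [i]φ_1) ∧ ⋯ ∧ ◇(φ̄_0 ∧ ⋯ ∧ φ̄_{n'-1} ∧ [i]φ_{n'})`
of the (n'+1)-choice axiom. -/
def apcAnte {m : ℕ} (i : Fin m) (f : ℕ → Fml m) (n' : ℕ) : Fml m :=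
  conjUpTo (fun j => Fml.dia (prefNegConj f j (Fml.ag i (f j)))) n'

/-- The n-choice axiom `APC_n^i` for `n = n' + 1` choices `φ_0, …, φ_{n'}`. -/
def apcAx {m : ℕ} (i : Fin m) (f : ℕ → Fml m) (n' : ℕ) : Fml m :=
  (apcAnte i f n').impF (disjUpTo f n')

def diaAgIdx {m : ℕ} (f : Fin m → Fml m) (j : ℕ) : Fml m :=
  if h : j < m then Fml.dia (Fml.ag ⟨j, h⟩ (f ⟨j, h⟩)) else Fml.pos 0

def agIdx {m : ℕ} (f : Fin m → Fml m) (j : ℕ) : Fml m :=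
  if h : j < m then Fml.ag ⟨j, h⟩ (f ⟨j, h⟩) else Fml.pos 0

/-- The independence-of-agents axiom `⋀_{i∈Ag} ◇[i]φ_i → ◇(⋀_{i∈Ag} [i]φ_i)`
(for `m ≥ 1` agents). -/
def ioaAx {m : ℕ} (f : Fin m → Fml m) : Fml m :=
  (conjUpTo (diaAgIdx f) (m-1)).impF (Fml.dia (conjUpTo (agIdx f) (m-1)))

/-- An `Ldm_n^m`-model on the carrier `W`: each `rel i` is an equivalence relation (C1),
independence of agents (C2), the `n`-choice condition when `n > 0` (C3), plus a valuation. -/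
structure ModelOn (n m : ℕ) (W : Type) : Type where
  nonemp : Nonempty W
  rel : Fin m → W → W → Prop
  refl : ∀ i w, rel i w w
  symm : ∀ i w u, rel i w u → rel i u w
  trans : ∀ i w u v, rel i w u → rel i u v → rel i w v
  ioa : ∀ u : Fin m → W, ∃ v, ∀ i, rel i (u i) v
  apc : 0 < n → ∀ (i : Fin m) (w : Fin (n+1) → W),
      ∃ k j : Fin (n+1), k < j ∧ rel i (w k) (w j)
  val : ℕ → Set W

/-- Satisfaction `M, w ⊩ φ`. -/
def Sat {n m : ℕ} {W : Type} (M : ModelOn n m W) : W → Fml m → Prop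
  | w, .pos p => w ∈ M.val p
  | w, .neg p => w ∉ M.val p
  | w, .and φ ψ => Sat M w φ ∧ Sat M w ψ
  | w, .or φ ψ => Sat M w φ ∨ Sat M w ψ
  | _, .box φ => ∀ u, Sat M u φ
  | _, .dia φ => ∃ u, Sat M u φ
  | w, .ag i φ => ∀ u, M.rel i w u → Sat M u φ
  | w, .dag i φ => ∃ u, M.rel i w u ∧ Sat M u φ

/-- Validity: `⊩ φ`. -/
def Valid (n m : ℕ) (φ : Fml m) : Prop :=
  ∀ (W : Type) (M : ModelOn n m W) (w : W), Sat M w φ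

/-- Semantic consequence `Γ ⊩ φ`. -/
def SemConseq (n m : ℕ) (Γ : Set (Fml m)) (φ : Fml m) : Prop :=
  ∀ (W : Type) (M : ModelOn n m W) (w : W), (∀ ψ ∈ Γ, Sat M w ψ) → Sat M w φ

/-- The Hilbert calculus `Ldm_n^m`: classical propositional logic, S5 for `□` and each
`[i]`, the bridge axiom, IOA, the n-choice axioms (for `n > 0`), with modus ponens and
necessitation (applied to theorems). `Hderiv n m Γ φ` is `Γ ⊢_{Ldm_n^m} φ`. -/
inductive Hderiv (n m : ℕ) : Set (Fml m) → Fml m → Prop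
  | prem {Γ} {φ} (h : φ ∈ Γ) : Hderiv n m Γ φ
  | ax1 {Γ} (φ ψ : Fml m) : Hderiv n m Γ (φ.impF (ψ.impF φ))
  | ax2 {Γ} (φ ψ χ : Fml m) :
      Hderiv n m Γ ((φ.impF (ψ.impF χ)).impF ((φ.impF ψ).impF (φ.impF χ)))
  | ax3 {Γ} (φ ψ : Fml m) :
      Hderiv n m Γ ((ψ.negF.impF φ.negF).impF (φ.impF ψ))
  | boxK {Γ} (φ ψ : Fml m) :
      Hderiv n m Γ ((Fml.box (φ.impF ψ)).impF ((Fml.box φ).impF (Fml.box ψ)))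
  | boxT {Γ} (φ : Fml m) : Hderiv n m Γ ((Fml.box φ).impF φ)
  | box5 {Γ} (φ : Fml m) : Hderiv n m Γ ((Fml.dia φ).impF (Fml.box (Fml.dia φ)))
  | boxDual {Γ} (φ : Fml m) : Hderiv n m Γ (Fml.or (Fml.box φ) (Fml.dia φ.negF))
  | agK {Γ} (i : Fin m) (φ ψ : Fml m) :
      Hderiv n m Γ ((Fml.ag i (φ.impF ψ)).impF ((Fml.ag i φ).impF (Fml.ag i ψ)))
  | agT {Γ} (i : Fin m) (φ : Fml m) : Hderiv n m Γ ((Fml.ag i φ).impF φ)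
  | ag5 {Γ} (i : Fin m) (φ : Fml m) :
      Hderiv n m Γ ((Fml.dag i φ).impF (Fml.ag i (Fml.dag i φ)))
  | agDual {Γ} (i : Fin m) (φ : Fml m) :
      Hderiv n m Γ (Fml.or (Fml.ag i φ) (Fml.dag i φ.negF))
  | bridge {Γ} (i : Fin m) (φ : Fml m) :
      Hderiv n m Γ ((Fml.box φ).impF (Fml.ag i φ))
  | ioa {Γ} (f : Fin m → Fml m) : Hderiv n m Γ (ioaAx f)
  | apc {Γ} (hn : 0 < n) (i : Fin m) (f : ℕ → Fml m) :
      Hderiv n m Γ (apcAx i f (n-1))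
  | mp {Γ} {φ ψ} : Hderiv n m Γ (φ.impF ψ) → Hderiv n m Γ φ → Hderiv n m Γ ψ
  | nec {Γ} {φ} : Hderiv n m ∅ φ → Hderiv n m Γ (Fml.box φ)

/-- A relational atom `R_i x y`. -/
abbrev RAtom (m : ℕ) : Type := Fin m × ℕ × ℕ
/-- The relational part of a labelled sequent: a multiset of relational atoms. -/
abbrev RAtoms (m : ℕ) : Type := Multiset (RAtom m)
/-- A labelled formula `x : φ`. -/
abbrev LFml (m : ℕ) : Type := ℕ × Fml m
/-- The formula part of a labelled sequent: a multiset of labelled formulas. -/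
abbrev LFmls (m : ℕ) : Type := Multiset (LFml m)

/-- The label `v` does not occur in the labelled sequent `R, Γ` (eigenvariable condition). -/
def freshIn {m : ℕ} (v : ℕ) (R : RAtoms m) (Γ : LFmls m) : Prop :=
  (∀ a ∈ R, a.2.1 ≠ v ∧ a.2.2 ≠ v) ∧ ∀ e ∈ Γ, e.1 ≠ v

/-- `Reach R i w u`: `u` is `i`-reachable from `w`, i.e. there is a (possibly empty)
path of `R_i`-atoms of `R` (traversed in either direction) connecting `w` to `u`. -/
inductive Reach {m : ℕ} (R : RAtoms m) (i : Fin m) : ℕ → ℕ → Prop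
  | refl (w : ℕ) : Reach R i w w
  | fwd {w u v : ℕ} : Reach R i w u → ((i, u, v) : RAtom m) ∈ R → Reach R i w v
  | bwd {w u v : ℕ} : Reach R i w u → ((i, v, u) : RAtom m) ∈ R → Reach R i w v

/-- The relational atoms `R_1 u_1 v, …, R_m u_m v` used by the rule (IOA). -/
def ioaAtoms {m : ℕ} (u : Fin m → ℕ) (v : ℕ) : RAtoms m :=
  Multiset.ofList ((List.finRange m).map fun i => ((i, u i, v) : RAtom m))

/-- Which optional rules are present in a labelled calculus, and whether the
`[i]`-rule keeps its principal formula in the premise. -/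
structure Flags : Type where
  refl : Bool    -- (refl_i)
  eucl : Bool    -- (eucl_i)
  diaAg : Bool   -- (⟨i⟩)
  pr : Bool      -- (Pr_i)
  ioa : Bool     -- (IOA)
  agKeep : Bool  -- premise of ([i]) keeps w:[i]φ

/-- `SeqH fl n m h R Γ`: the labelled sequent `R, Γ` has a derivation of height at most
`h` in the labelled calculus determined by `fl` (with parameters `n`, `m`). -/
inductive SeqH (fl : Flags) (n m : ℕ) : ℕ → RAtoms m → LFmls m → Prop
  | id {h : ℕ} {R : RAtoms m} {Γ : LFmls m} (w p : ℕ) :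
      SeqH fl n m h R ((w, Fml.pos p) ::ₘ (w, Fml.neg p) ::ₘ Γ)
  | andR {h R Γ} {w : ℕ} {φ ψ : Fml m} :
      SeqH fl n m h R ((w, Fml.and φ ψ) ::ₘ (w, φ) ::ₘ Γ) →
      SeqH fl n m h R ((w, Fml.and φ ψ) ::ₘ (w, ψ) ::ₘ Γ) →
      SeqH fl n m (h+1) R ((w, Fml.and φ ψ) ::ₘ Γ)
  | orR {h R Γ} {w : ℕ} {φ ψ : Fml m} :
      SeqH fl n m h R ((w, Fml.or φ ψ) ::ₘ (w, φ) ::ₘ (w, ψ) ::ₘ Γ) →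
      SeqH fl n m (h+1) R ((w, Fml.or φ ψ) ::ₘ Γ)
  | boxR {h R Γ} {w v : ℕ} {φ : Fml m}
      (hv : freshIn v R ((w, Fml.box φ) ::ₘ Γ)) :
      SeqH fl n m h R ((w, Fml.box φ) ::ₘ (v, φ) ::ₘ Γ) →
      SeqH fl n m (h+1) R ((w, Fml.box φ) ::ₘ Γ)
  | diaR {h R Γ} {w u : ℕ} {φ : Fml m} :
      SeqH fl n m h R ((w, Fml.dia φ) ::ₘ (u, φ) ::ₘ Γ) →
      SeqH fl n m (h+1) R ((w, Fml.dia φ) ::ₘ Γ)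
  | agR {h R Γ} {w v : ℕ} {i : Fin m} {φ : Fml m} (hfl : fl.agKeep = false)
      (hv : freshIn v R ((w, Fml.ag i φ) ::ₘ Γ)) :
      SeqH fl n m h (((i, w, v) : RAtom m) ::ₘ R) ((v, φ) ::ₘ Γ) →
      SeqH fl n m (h+1) R ((w, Fml.ag i φ) ::ₘ Γ)
  | agRKeep {h R Γ} {w v : ℕ} {i : Fin m} {φ : Fml m} (hfl : fl.agKeep = true)
      (hv : freshIn v R ((w, Fml.ag i φ) ::ₘ Γ)) :
      SeqH fl n m h (((i, w, v) : RAtom m) ::ₘ R) ((w, Fml.ag i φ) ::ₘ (v, φ) ::ₘ Γ) →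
      SeqH fl n m (h+1) R ((w, Fml.ag i φ) ::ₘ Γ)
  | dagR {h R Γ} {w u : ℕ} {i : Fin m} {φ : Fml m} (hfl : fl.diaAg = true) :
      SeqH fl n m h (((i, w, u) : RAtom m) ::ₘ R) ((w, Fml.dag i φ) ::ₘ (u, φ) ::ₘ Γ) →
      SeqH fl n m (h+1) (((i, w, u) : RAtom m) ::ₘ R) ((w, Fml.dag i φ) ::ₘ Γ)
  | reflR {h R Γ} {i : Fin m} {w : ℕ} (hfl : fl.refl = true) :
      SeqH fl n m h (((i, w, w) : RAtom m) ::ₘ R) Γ →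
      SeqH fl n m (h+1) R Γ
  | euclR {h R Γ} {i : Fin m} {w u v : ℕ} (hfl : fl.eucl = true) :
      SeqH fl n m h (((i, w, u) : RAtom m) ::ₘ ((i, w, v) : RAtom m) ::ₘ
        ((i, u, v) : RAtom m) ::ₘ R) Γ →
      SeqH fl n m (h+1) (((i, w, u) : RAtom m) ::ₘ ((i, w, v) : RAtom m) ::ₘ R) Γ
  | ioaR {h R Γ} (hfl : fl.ioa = true) (u : Fin m → ℕ) (v : ℕ) (hv : freshIn v R Γ) :
      SeqH fl n m h (ioaAtoms u v + R) Γ →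
      SeqH fl n m (h+1) R Γ
  | apcR {h R Γ} (hn : 0 < n) (i : Fin m) (w : Fin (n+1) → ℕ) :
      (∀ k j : Fin (n+1), k < j → SeqH fl n m h (((i, w k, w j) : RAtom m) ::ₘ R) Γ) →
      SeqH fl n m (h+1) R Γ
  | prR {h R Γ} {w u : ℕ} {i : Fin m} {φ : Fml m} (hfl : fl.pr = true)
      (hreach : Reach R i w u) :
      SeqH fl n m h R ((w, Fml.dag i φ) ::ₘ (u, φ) ::ₘ Γ) →
      SeqH fl n m (h+1) R ((w, Fml.dag i φ) ::ₘ Γ)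

/-- Derivability (of some height) in the labelled calculus determined by `fl`. -/
def Seq (fl : Flags) (n m : ℕ) (R : RAtoms m) (Γ : LFmls m) : Prop :=
  ∃ h, SeqH fl n m h R Γ

/-- The calculus `G3Ldm_n^m`. -/
def G3flags : Flags := ⟨true, true, true, false, true, false⟩
/-- The calculus `G3Ldm_n^m + PR`. -/
def G3PRflags : Flags := ⟨true, true, true, true, true, false⟩
/-- `G3Ldm_n^m + PR` without the rules `(refl_i)`. -/
def G3PRnoReflFlags : Flags := ⟨false, true, true, true, true, false⟩
/-- `G3Ldm_n^m + PR` without the rules `(eucl_i)`. -/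
def G3PRnoEuclFlags : Flags := ⟨true, false, true, true, true, false⟩
/-- The refined calculus `Ldm_n^m L`. -/
def LdmLflags : Flags := ⟨false, false, false, true, true, true⟩
/-- The refined single-agent calculus `Ldm_n^1 L` (no (IOA)). -/
def LdmL1flags : Flags := ⟨false, false, false, true, false, true⟩

/-- Substitution of the label `y` for the label `x`. -/
def substLab (x y v : ℕ) : ℕ := if v = x then y else v

def substR {m : ℕ} (x y : ℕ) (R : RAtoms m) : RAtoms m :=
  R.map fun a => (a.1, substLab x y a.2.1, substLab x y a.2.2)

def substF {m : ℕ} (x y : ℕ) (Γ : LFmls m) : LFmls m :=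
  Γ.map fun e => (substLab x y e.1, e.2)

/-- Height-preserving invertibility of every inference rule of the calculus given by `fl`. -/
def InvertAll (fl : Flags) (n m : ℕ) : Prop :=
  (∀ h R Γ (w : ℕ) (φ ψ : Fml m), SeqH fl n m h R ((w, Fml.and φ ψ) ::ₘ Γ) →
     SeqH fl n m h R ((w, Fml.and φ ψ) ::ₘ (w, φ) ::ₘ Γ) ∧
     SeqH fl n m h R ((w, Fml.and φ ψ) ::ₘ (w, ψ) ::ₘ Γ)) ∧
  (∀ h R Γ (w : ℕ) (φ ψ : Fml m), SeqH fl n m h R ((w, Fml.or φ ψ) ::ₘ Γ) →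
     SeqH fl n m h R ((w, Fml.or φ ψ) ::ₘ (w, φ) ::ₘ (w, ψ) ::ₘ Γ)) ∧
  (∀ h R Γ (w v : ℕ) (φ : Fml m), freshIn v R ((w, Fml.box φ) ::ₘ Γ) →
     SeqH fl n m h R ((w, Fml.box φ) ::ₘ Γ) →
     SeqH fl n m h R ((w, Fml.box φ) ::ₘ (v, φ) ::ₘ Γ)) ∧
  (∀ h R Γ (w u : ℕ) (φ : Fml m), SeqH fl n m h R ((w, Fml.dia φ) ::ₘ Γ) →
     SeqH fl n m h R ((w, Fml.dia φ) ::ₘ (u, φ) ::ₘ Γ)) ∧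
  (fl.agKeep = false → ∀ h R Γ (w v : ℕ) (i : Fin m) (φ : Fml m),
     freshIn v R ((w, Fml.ag i φ) ::ₘ Γ) →
     SeqH fl n m h R ((w, Fml.ag i φ) ::ₘ Γ) →
     SeqH fl n m h (((i, w, v) : RAtom m) ::ₘ R) ((v, φ) ::ₘ Γ)) ∧
  (fl.agKeep = true → ∀ h R Γ (w v : ℕ) (i : Fin m) (φ : Fml m),
     freshIn v R ((w, Fml.ag i φ) ::ₘ Γ) →
     SeqH fl n m h R ((w, Fml.ag i φ) ::ₘ Γ) →
     SeqH fl n m h (((i, w, v) : RAtom m) ::ₘ R) ((w, Fml.ag i φ) ::ₘ (v, φ) ::ₘ Γ)) ∧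
  (fl.diaAg = true → ∀ h R Γ (w u : ℕ) (i : Fin m) (φ : Fml m),
     SeqH fl n m h (((i, w, u) : RAtom m) ::ₘ R) ((w, Fml.dag i φ) ::ₘ Γ) →
     SeqH fl n m h (((i, w, u) : RAtom m) ::ₘ R) ((w, Fml.dag i φ) ::ₘ (u, φ) ::ₘ Γ)) ∧
  (fl.refl = true → ∀ h R Γ (i : Fin m) (w : ℕ), SeqH fl n m h R Γ →
     SeqH fl n m h (((i, w, w) : RAtom m) ::ₘ R) Γ) ∧
  (fl.eucl = true → ∀ h R Γ (i : Fin m) (w u v : ℕ),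
     SeqH fl n m h (((i, w, u) : RAtom m) ::ₘ ((i, w, v) : RAtom m) ::ₘ R) Γ →
     SeqH fl n m h (((i, w, u) : RAtom m) ::ₘ ((i, w, v) : RAtom m) ::ₘ
       ((i, u, v) : RAtom m) ::ₘ R) Γ) ∧
  (fl.ioa = true → ∀ h R Γ (u : Fin m → ℕ) (v : ℕ), freshIn v R Γ →
     SeqH fl n m h R Γ → SeqH fl n m h (ioaAtoms u v + R) Γ) ∧
  (0 < n → ∀ h R Γ (i : Fin m) (w : Fin (n+1) → ℕ) (k j : Fin (n+1)), k < j →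
     SeqH fl n m h R Γ → SeqH fl n m h (((i, w k, w j) : RAtom m) ::ₘ R) Γ) ∧
  (fl.pr = true → ∀ h R Γ (w u : ℕ) (i : Fin m) (φ : Fml m), Reach R i w u →
     SeqH fl n m h R ((w, Fml.dag i φ) ::ₘ Γ) →
     SeqH fl n m h R ((w, Fml.dag i φ) ::ₘ (u, φ) ::ₘ Γ))

/-- A labelled sequent `R, Γ` is satisfied in `M` under the interpretation `I`. -/
def SeqSat {n m : ℕ} {W : Type} (M : ModelOn n m W) (I : ℕ → W)
    (R : RAtoms m) (Γ : LFmls m) : Prop :=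
  (∀ a ∈ R, M.rel a.1 (I a.2.1) (I a.2.2)) → ∃ e ∈ Γ, Sat M (I e.1) e.2

/-- A labelled sequent is valid: satisfied in every model under every interpretation. -/
def SeqValid (n m : ℕ) (R : RAtoms m) (Γ : LFmls m) : Prop :=
  ∀ (W : Type) (M : ModelOn n m W) (I : ℕ → W), SeqSat M I R Γ

/-- The edge relation of the graph of a single-agent labelled sequent:
`(w,u)` is an edge iff `R_1 wu` occurs among the relational atoms. -/
def Edge (R : RAtoms 1) (x y : ℕ) : Prop := (((0 : Fin 1), x, y) : RAtom 1) ∈ R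

/-- A single-agent sequent is forestlike iff its graph is a disjoint union of
(rooted, directed) trees: every vertex has at most one parent and there are no
directed cycles, so that from the root of each component there is exactly one
directed path to every vertex of that component. -/
def Forestlike (R : RAtoms 1) : Prop :=
  (∀ x x' y, Edge R x y → Edge R x' y → x = x') ∧
  ∀ x, ¬ Relation.TransGen (Edge R) x x

/-- The set of labels occurring in the labelled sequent `R, Γ`. -/
def SeqLabels {m : ℕ} (R : RAtoms m) (Γ : LFmls m) : Set ℕ :=
  {x | (∃ a ∈ R, a.2.1 = x ∨ a.2.2 = x) ∨ ∃ e ∈ Γ, e.1 = x}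

/-- The calculus `Ldm_n^1 L` restricted to forestlike sequents: the same rules as
`Ldm_n^1 L` (id, ∧, ∨, □, ◇, [1], Pr_1 and, for `n > 0`, APC_n^1; no IOA), where the
conclusion of every rule application is required to be forestlike (hence every sequent
occurring in a derivation is forestlike). -/
inductive FSeq (n : ℕ) : RAtoms 1 → LFmls 1 → Prop
  | id {R Γ} (w p : ℕ) (hf : Forestlike R) :
      FSeq n R ((w, Fml.pos p) ::ₘ (w, Fml.neg p) ::ₘ Γ)
  | andR {R Γ} {w : ℕ} {φ ψ : Fml 1} (hf : Forestlike R) :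
      FSeq n R ((w, Fml.and φ ψ) ::ₘ (w, φ) ::ₘ Γ) →
      FSeq n R ((w, Fml.and φ ψ) ::ₘ (w, ψ) ::ₘ Γ) →
      FSeq n R ((w, Fml.and φ ψ) ::ₘ Γ)
  | orR {R Γ} {w : ℕ} {φ ψ : Fml 1} (hf : Forestlike R) :
      FSeq n R ((w, Fml.or φ ψ) ::ₘ (w, φ) ::ₘ (w, ψ) ::ₘ Γ) →
      FSeq n R ((w, Fml.or φ ψ) ::ₘ Γ)
  | boxR {R Γ} {w v : ℕ} {φ : Fml 1} (hf : Forestlike R)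
      (hv : freshIn v R ((w, Fml.box φ) ::ₘ Γ)) :
      FSeq n R ((w, Fml.box φ) ::ₘ (v, φ) ::ₘ Γ) →
      FSeq n R ((w, Fml.box φ) ::ₘ Γ)
  | diaR {R Γ} {w u : ℕ} {φ : Fml 1} (hf : Forestlike R) :
      FSeq n R ((w, Fml.dia φ) ::ₘ (u, φ) ::ₘ Γ) →
      FSeq n R ((w, Fml.dia φ) ::ₘ Γ)
  | agRKeep {R Γ} {w v : ℕ} {φ : Fml 1} (hf : Forestlike R)
      (hv : freshIn v R ((w, Fml.ag 0 φ) ::ₘ Γ)) :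
      FSeq n ((((0 : Fin 1), w, v) : RAtom 1) ::ₘ R)
        ((w, Fml.ag 0 φ) ::ₘ (v, φ) ::ₘ Γ) →
      FSeq n R ((w, Fml.ag 0 φ) ::ₘ Γ)
  | prR {R Γ} {w u : ℕ} {φ : Fml 1} (hf : Forestlike R)
      (hreach : Reach R 0 w u) :
      FSeq n R ((w, Fml.dag 0 φ) ::ₘ (u, φ) ::ₘ Γ) →
      FSeq n R ((w, Fml.dag 0 φ) ::ₘ Γ)
  | apcR {R Γ} (hf : Forestlike R) (hn : 0 < n) (i : Fin 1) (w : Fin (n+1) → ℕ) :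
      (∀ k j : Fin (n+1), k < j → FSeq n (((i, w k, w j) : RAtom 1) ::ₘ R) Γ) →
      FSeq n R Γ

/-!
A derivation is replayed over a forest. The rule (Pr₁) and the eigenvariable conditions only
see which labels are connected, so the relational atoms `R` of a sequent may be replaced by
any forest `R'` without new labels in which the endpoints of each atom of `R` are connected.
The rule ([1]) adds an edge to a fresh label, which keeps a forest a forest. For (APC), either
two of the labels `w k` are already connected in `R'`, and one premise suffices, or they lie in
pairwise distinct trees; then the rule is applied to the roots of these trees instead, and each
premise joins two distinct trees at a root. Roots exist because a finite acyclic graph is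
well founded.
-/

open Relation

section Reach

variable {m : ℕ} {R R' : RAtoms m} {i : Fin m} {x y z : ℕ}

theorem Reach.trans (h₁ : Reach R i x y) (h₂ : Reach R i y z) : Reach R i x z := by
  induction h₂ with
  | refl => exact h₁
  | fwd _ hm ih => exact ih.fwd hm
  | bwd _ hm ih => exact ih.bwd hm

theorem Reach.symm (h : Reach R i x y) : Reach R i y x := by
  induction h with
  | refl => exact .refl _
  | fwd _ hm ih => exact (Reach.refl _ |>.bwd hm).trans ih
  | bwd _ hm ih => exact (Reach.refl _ |>.fwd hm).trans ih

theorem Reach.mono (h : Reach R i x y) (hR : R ⊆ R') : Reach R' i x y := by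
  induction h with
  | refl => exact .refl _
  | fwd _ hm ih => exact ih.fwd (hR hm)
  | bwd _ hm ih => exact ih.bwd (hR hm)

theorem Reach.mem_insert_seqLabels (h : Reach R i x y) (Γ : LFmls m) :
    y ∈ insert x (SeqLabels R Γ) := by
  cases h with
  | refl => exact Set.mem_insert _ _
  | fwd _ hm => exact Or.inr (Or.inl ⟨_, hm, Or.inr rfl⟩)
  | bwd _ hm => exact Or.inr (Or.inl ⟨_, hm, Or.inl rfl⟩)

def Connects (R' R : RAtoms m) : Prop := ∀ a ∈ R, Reach R' a.1 a.2.1 a.2.2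

theorem connects_cons_iff {a : RAtom m} :
    Connects R' (a ::ₘ R) ↔ Reach R' a.1 a.2.1 a.2.2 ∧ Connects R' R := by
  simp [Connects]

theorem Connects.mono {R'' : RAtoms m} (h : Connects R' R) (hR : R' ⊆ R'') : Connects R'' R :=
  fun a ha => (h a ha).mono hR

theorem Reach.of_connects (h : Reach R i x y) (hc : Connects R' R) : Reach R' i x y := by
  induction h with
  | refl => exact .refl _
  | fwd _ hm ih => exact ih.trans (hc _ hm)
  | bwd _ hm ih => exact ih.trans (hc _ hm).symm

end Reach

section Labels

variable {m : ℕ} {R R' : RAtoms m} {Γ Γ' : LFmls m}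

theorem seqLabels_mono (hR : R ⊆ R') (hΓ : Γ ⊆ Γ') :
    SeqLabels R Γ ⊆ SeqLabels R' Γ' := by
  rintro z (⟨a, ha, hz⟩ | ⟨e, he, hz⟩)
  exacts [Or.inl ⟨a, hR ha, hz⟩, Or.inr ⟨e, hΓ he, hz⟩]

theorem seqLabels_cons (a : RAtom m) (R : RAtoms m) (Γ : LFmls m) :
    SeqLabels (a ::ₘ R) Γ = insert a.2.1 (insert a.2.2 (SeqLabels R Γ)) := by
  ext z
  simp only [SeqLabels, Multiset.mem_cons, Set.mem_insert_iff, Set.mem_ofPred_eq]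
  grind

theorem finite_seqLabels (R : RAtoms m) (Γ : LFmls m) : (SeqLabels R Γ).Finite := by
  refine (R.map (·.2.1) + R.map (·.2.2) + Γ.map (·.1)).finite_toSet.subset ?_
  rintro z (⟨a, ha, rfl | rfl⟩ | ⟨e, he, rfl⟩) <;>
    simp only [Set.mem_ofPred_eq, Multiset.mem_add, Multiset.mem_map] <;> grind

theorem freshIn_iff {v : ℕ} : freshIn v R Γ ↔ v ∉ SeqLabels R Γ := by
  simp only [freshIn, SeqLabels, Set.mem_ofPred_eq]
  grind

end Labels

section Forest

variable {R : RAtoms 1} {a b x y : ℕ}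

theorem edge_cons_iff :
    Edge (((0 : Fin 1), a, b) ::ₘ R) x y ↔ (x = a ∧ y = b) ∨ Edge R x y := by
  simp [Edge, eq_comm]

theorem Reach.of_reflTransGen (h : ReflTransGen (Edge R) x y) : Reach R 0 x y := by
  induction h with
  | refl => exact .refl _
  | tail _ hm ih => exact ih.fwd hm

theorem transGen_edge_cons (h : TransGen (Edge (((0 : Fin 1), a, b) ::ₘ R)) x y) :
    TransGen (Edge R) x y ∨ (ReflTransGen (Edge R) x a ∧ ReflTransGen (Edge R) b y) := by
  induction h with
  | single h =>
    rcases edge_cons_iff.1 h with ⟨rfl, rfl⟩ | h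
    exacts [Or.inr ⟨.refl, .refl⟩, Or.inl (.single h)]
  | tail _ hm ih =>
    rcases edge_cons_iff.1 hm with ⟨rfl, rfl⟩ | hm
    · rcases ih with ih | ⟨ih, -⟩
      exacts [Or.inr ⟨ih.to_reflTransGen, .refl⟩, Or.inr ⟨ih, .refl⟩]
    · rcases ih with ih | ⟨ih₁, ih₂⟩
      exacts [Or.inl (ih.tail hm), Or.inr ⟨ih₁, ih₂.tail hm⟩]

theorem Forestlike.cons (hf : Forestlike R) (hroot : ∀ y, ¬ Edge R y b)
    (hab : ¬ Reach R 0 b a) : Forestlike (((0 : Fin 1), a, b) ::ₘ R) := by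
  refine ⟨fun x x' y hx hx' => ?_, fun x hx => ?_⟩
  · rcases edge_cons_iff.1 hx with ⟨rfl, rfl⟩ | hxR
    · rcases edge_cons_iff.1 hx' with ⟨rfl, -⟩ | hx'R
      exacts [rfl, (hroot _ hx'R).elim]
    · rcases edge_cons_iff.1 hx' with ⟨-, rfl⟩ | hx'R
      exacts [(hroot _ hxR).elim, hf.1 x x' y hxR hx'R]
  · rcases transGen_edge_cons hx with hx | ⟨hxa, hbx⟩
    exacts [hf.2 x hx, hab (.of_reflTransGen (hbx.trans hxa))]

theorem Forestlike.cons_fresh {Γ : LFmls 1} (hf : Forestlike R) (hb : b ∉ SeqLabels R Γ)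
    (hab : a ≠ b) : Forestlike (((0 : Fin 1), a, b) ::ₘ R) :=
  hf.cons (fun _ hy => hb (Or.inl ⟨_, hy, Or.inr rfl⟩))
    fun h => (Set.mem_insert_iff.1 (h.symm.mem_insert_seqLabels Γ)).elim (fun h => hab h.symm) hb

theorem wellFounded_edge (hacyc : ∀ x, ¬ TransGen (Edge R) x x) : WellFounded (Edge R) := by
  have : IsStrictOrder ℕ (TransGen (Edge R)) :=
    { irrefl := hacyc, trans := fun _ _ _ => TransGen.trans }
  refine Subrelation.wf (fun h => ⟨TransGen.single h, ?_, ?_⟩)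
    (Set.wellFoundedOn_iff.1 (finite_seqLabels R 0).wellFoundedOn)
  exacts [Or.inl ⟨_, h, Or.inl rfl⟩, Or.inl ⟨_, h, Or.inr rfl⟩]

theorem exists_reach_root (hwf : WellFounded (Edge R)) (x : ℕ) :
    ∃ z, Reach R 0 x z ∧ ∀ y, ¬ Edge R y z := by
  obtain ⟨z, hz, hmin⟩ := hwf.has_min {z | ReflTransGen (Edge R) z x} ⟨x, .refl⟩
  exact ⟨z, (Reach.of_reflTransGen hz).symm, fun y hy => hmin y (.head hy hz) hy⟩

end Forest

def ForestDerivable (n : ℕ) (R : RAtoms 1) (Γ : LFmls 1) : Prop :=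
  ∀ R', Forestlike R' → Connects R' R → SeqLabels R' Γ ⊆ SeqLabels R Γ → FSeq n R' Γ

section ForestDerivable

variable {n : ℕ} {R : RAtoms 1} {Γ Γ' : LFmls 1}

theorem ForestDerivable.of_subset (h : ForestDerivable n R Γ') (hΓ : Γ ⊆ Γ') {R' : RAtoms 1}
    (hf : Forestlike R') (hc : Connects R' R) (hl : SeqLabels R' Γ ⊆ SeqLabels R Γ) :
    FSeq n R' Γ' := by
  refine h R' hf hc ?_
  rintro z (hz | ⟨e, he, hz⟩)
  · exact seqLabels_mono (Multiset.Subset.refl R) hΓ (hl (Or.inl hz))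
  · exact Or.inr ⟨e, he, hz⟩

theorem ForestDerivable.ag {w v : ℕ} {i : Fin 1} {φ : Fml 1}
    (hv : freshIn v R ((w, Fml.ag i φ) ::ₘ Γ))
    (h : ForestDerivable n ((i, w, v) ::ₘ R) ((w, Fml.ag i φ) ::ₘ (v, φ) ::ₘ Γ)) :
    ForestDerivable n R ((w, Fml.ag i φ) ::ₘ Γ) := by
  obtain rfl : i = 0 := Subsingleton.elim _ _
  intro R' hf hc hl
  have hv' : v ∉ SeqLabels R' ((w, Fml.ag 0 φ) ::ₘ Γ) := fun h => freshIn_iff.1 hv (hl h)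
  have hwv : w ≠ v := fun h => hv' (Or.inr ⟨_, Multiset.mem_cons_self _ _, h⟩)
  refine .agRKeep hf (freshIn_iff.2 hv') (h.of_subset (Γ := (w, Fml.ag 0 φ) ::ₘ Γ)
    (Multiset.cons_subset_cons (Multiset.subset_cons _ _)) (hf.cons_fresh hv' hwv) ?_ ?_)
  · exact connects_cons_iff.2
      ⟨(Reach.refl w).fwd (Multiset.mem_cons_self _ _), hc.mono (Multiset.subset_cons _ _)⟩
  · rw [seqLabels_cons, seqLabels_cons]
    exact Set.insert_subset_insert (Set.insert_subset_insert hl)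

theorem ForestDerivable.apc (hn : 0 < n) (i : Fin 1) (w : Fin (n+1) → ℕ)
    (h : ∀ k j : Fin (n+1), k < j → ForestDerivable n ((i, w k, w j) ::ₘ R) Γ) :
    ForestDerivable n R Γ := by
  obtain rfl : i = 0 := Subsingleton.elim _ _
  intro R' hf hc hl
  by_cases hconn : ∃ k j, k < j ∧ Reach R' 0 (w k) (w j)
  · obtain ⟨k, j, hkj, hr⟩ := hconn
    exact h k j hkj R' hf (connects_cons_iff.2 ⟨hr, hc⟩)
      (hl.trans (seqLabels_mono (Multiset.subset_cons _ _) (Multiset.Subset.refl _)))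
  choose ρ hρ hroot using fun k => exists_reach_root (wellFounded_edge hf.2) (w k)
  refine .apcR hf hn 0 ρ fun k j hkj => h k j hkj _ (hf.cons (hroot j) fun hr =>
    hconn ⟨k, j, hkj, (hρ k).trans (hr.symm.trans (hρ j).symm)⟩) ?_ ?_
  · have hsub := Multiset.subset_cons R' ((0 : Fin 1), ρ k, ρ j)
    refine connects_cons_iff.2 ⟨?_, hc.mono hsub⟩
    exact (((hρ k).mono hsub).fwd (Multiset.mem_cons_self _ _)).trans ((hρ j).symm.mono hsub)
  · have hk := (hρ k).mem_insert_seqLabels Γ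
    have hj := (hρ j).mem_insert_seqLabels Γ
    rw [seqLabels_cons, seqLabels_cons]
    grind

end ForestDerivable

open Multiset in
theorem SeqH.forestDerivable {n h : ℕ} {R : RAtoms 1} {Γ : LFmls 1}
    (hd : SeqH LdmL1flags n 1 h R Γ) : ForestDerivable n R Γ := by
  induction hd with
  | id w p => exact fun R' hf _ _ => .id w p hf
  | andR _ _ ih₁ ih₂ =>
    exact fun R' hf hc hl =>
      .andR hf (ih₁.of_subset (by simp +contextual [subset_iff]) hf hc hl)
        (ih₂.of_subset (by simp +contextual [subset_iff]) hf hc hl)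
  | orR _ ih =>
    exact fun R' hf hc hl => .orR hf (ih.of_subset (by simp +contextual [subset_iff]) hf hc hl)
  | boxR hv _ ih =>
    exact fun R' hf hc hl => .boxR hf (freshIn_iff.2 fun h => freshIn_iff.1 hv (hl h))
      (ih.of_subset (by simp +contextual [subset_iff]) hf hc hl)
  | diaR _ ih =>
    exact fun R' hf hc hl => .diaR hf (ih.of_subset (by simp +contextual [subset_iff]) hf hc hl)
  | agRKeep _ hv _ ih => exact .ag hv ih
  | @prR _ _ _ _ _ i _ _ hreach _ ih =>
    obtain rfl : i = 0 := Subsingleton.elim _ _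
    exact fun R' hf hc hl => .prR hf (hreach.of_connects hc)
      (ih.of_subset (by simp +contextual [subset_iff]) hf hc hl)
  | apcR hn i w _ ih => exact .apc hn i w ih
  | agR hfl | dagR hfl | reflR hfl | euclR hfl | ioaR hfl => exact absurd hfl (by decide)

theorem forestlike_zero : Forestlike 0 := by
  refine ⟨fun _ _ _ h => absurd h (Multiset.notMem_zero _), fun x hx => ?_⟩
  obtain ⟨_, h, -⟩ := TransGen.head'_iff.1 hx
  exact Multiset.notMem_zero _ h

/-- Forestlike derivations suffice in `Ldm_n^1 L`: if `w:φ` is derivable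
in `Ldm_n^1 L`, then it has a derivation in which every labelled sequent is forestlike. -/
theorem forestlike_derivations_suffice (n : ℕ) (w : ℕ) (φ : Fml 1)
    (hd : Seq LdmL1flags n 1 0 {(w, φ)}) :
    FSeq n 0 {(w, φ)} := by
  obtain ⟨h, hd⟩ := hd
  exact hd.forestDerivable 0 forestlike_zero (fun _ h => absurd h (Multiset.notMem_zero _))
    subset_rfl

end Stit
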